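/- Let m, k be integers with m ≥ 5 and 2 ≤ k ≤ ⌊(m-1)/2⌋. Then 3^m - 3^{m-1} - 2^k·C(m-1, k) > Σ_{j=1}^{k} 2^j·C(m, j). (That is, the minimum distance of the code C_{ḡ_{(m,k)}} exceeds the minimum distance Σ_{j=1}^{k} 2^j·C(m, j) of the code C_{g_{(m,k)}} constructed by Heng, Ding and Zhou.) -/

import Mathlib

/-!
Every term of the left-hand side is at most `2^k · C(m, j)`, and since `2k < m` the binomial
coefficients `C(m, j)` with `j ≤ k` make up at most half of `2^m`; likewise `C(m-1, k) ≤ 2^(m-1)`.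
Both quantities are therefore at most `2^(m-1+k)`, which is smaller than `3^(m-1)` because
`2^(2(m-1+k)) ≤ 8^(m-1) < 9^(m-1)`. Together they stay below `2 · 3^(m-1) = 3^m - 3^(m-1)`.
-/

open Finset

/-- The terms with `j ≤ k` and their mirror images `n - j` are disjoint parts of `∑ j, C(n, j)`. -/
theorem Nat.sum_range_choose_le_two_pow_pred {n k : ℕ} (h : 2 * k < n) :
    ∑ j ∈ range (k + 1), n.choose j ≤ 2 ^ (n - 1) := by
  have mirror : ∑ j ∈ (range (k + 1)).image (n - ·), n.choose j
      = ∑ j ∈ range (k + 1), n.choose j := by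
    rw [sum_image fun a ha b hb hab => by simp only [coe_range, Set.mem_Iio] at ha hb; omega]
    exact sum_congr rfl fun j hj => Nat.choose_symm (by simp only [mem_range] at hj; omega)
  have disjoint : Disjoint (range (k + 1)) ((range (k + 1)).image (n - ·)) := by
    simp only [disjoint_left, mem_image, mem_range]
    omega
  have subset : range (k + 1) ∪ (range (k + 1)).image (n - ·) ⊆ range (n + 1) := by
    intro j
    simp only [mem_union, mem_image, mem_range]
    omega
  have : 2 * ∑ j ∈ range (k + 1), n.choose j ≤ 2 * 2 ^ (n - 1) :=
    calc 2 * ∑ j ∈ range (k + 1), n.choose j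
        = ∑ j ∈ range (k + 1) ∪ (range (k + 1)).image (n - ·), n.choose j := by
          rw [sum_union disjoint, mirror, two_mul]
      _ ≤ ∑ j ∈ range (n + 1), n.choose j := sum_le_sum_of_subset subset
      _ = 2 * 2 ^ (n - 1) := by rw [Nat.sum_range_choose, ← pow_succ']; congr 1; omega
  omega

theorem sum_Icc_two_pow_mul_choose_le (n k : ℕ) :
    ∑ j ∈ Icc 1 k, 2 ^ j * n.choose j ≤ 2 ^ k * ∑ j ∈ range (k + 1), n.choose j := by
  rw [mul_sum]
  calc ∑ j ∈ Icc 1 k, 2 ^ j * n.choose j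
      ≤ ∑ j ∈ range (k + 1), 2 ^ j * n.choose j :=
        sum_le_sum_of_subset fun j => by simp only [mem_Icc, mem_range]; omega
    _ ≤ ∑ j ∈ range (k + 1), 2 ^ k * n.choose j :=
        sum_le_sum fun j hj => Nat.mul_le_mul_right _ <|
          Nat.pow_le_pow_right two_pos (by simp only [mem_range] at hj; omega)

theorem two_pow_add_lt_three_pow {n k : ℕ} (hn : n ≠ 0) (h : 2 * k ≤ n) :
    2 ^ (n + k) < 3 ^ n := by
  refine lt_of_pow_lt_pow_left₀ 2 (by positivity) ?_
  calc (2 ^ (n + k)) ^ 2 ≤ 2 ^ (3 * n) := by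
        rw [← pow_mul]; exact Nat.pow_le_pow_right two_pos (by omega)
    _ = 8 ^ n := by rw [pow_mul]; norm_num
    _ < 9 ^ n := Nat.pow_lt_pow_left (by norm_num) hn
    _ = (3 ^ n) ^ 2 := by rw [← pow_mul, mul_comm, pow_mul]; norm_num

theorem stmt_5 (m k : ℕ) (hm : 5 ≤ m) (hk : k ≤ (m - 1) / 2) :
    ∑ j ∈ Finset.Icc 1 k, (2 : ℤ) ^ j * (m.choose j : ℤ)
      < (3 : ℤ) ^ m - 3 ^ (m - 1) - 2 ^ k * ((m - 1).choose k : ℤ) := by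
  have lhs_le : ∑ j ∈ Icc 1 k, 2 ^ j * m.choose j ≤ 2 ^ k * 2 ^ (m - 1) :=
    (sum_Icc_two_pow_mul_choose_le m k).trans <|
      Nat.mul_le_mul_left _ (Nat.sum_range_choose_le_two_pow_pred (by omega))
  have choose_le : 2 ^ k * (m - 1).choose k ≤ 2 ^ k * 2 ^ (m - 1) :=
    Nat.mul_le_mul_left _ (Nat.choose_le_two_pow _ _)
  have pow_lt : 2 ^ k * 2 ^ (m - 1) < 3 ^ (m - 1) := by
    rw [← pow_add, add_comm]; exact two_pow_add_lt_three_pow (by omega) (by omega)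
  have three_pow : (3 : ℤ) ^ m = 3 * 3 ^ (m - 1) := by rw [← pow_succ']; congr 1; omega
  zify at lhs_le choose_le pow_lt
  linarith
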